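/- arXiv:1202.1734 — 6 statements merged into one kernel-verified Lean document; each statement's English description precedes it below -/
import Mathlib

section
/- Let K ≥ 1, and for each k ∈ {1,…,K} let H_k ∈ ℂ^{M_r × M_k} and P_k ≥ 0. Set R̃ = Σ_{k=1}^K P_k · H_k H_kᴴ and let v ∈ ℂ^{M_r} be a unit-norm eigenvector of R̃ for its largest eigenvalue λ_max(R̃). Assume vᴴ H_k H_kᴴ v ≠ 0 for every k, and define Q_k = (P_k / (vᴴ H_k H_kᴴ v)) · H_kᴴ v vᴴ H_k. Then each Q_k is positive semidefinite with trace(Q_k) ≤ P_k, and λ_max(Σ_{k=1}^K H_k Q_k H_kᴴ) = λ_max(R̃). In particular the upper bound λ_max(R̃) on λ_max(Σ_k H_k Q_k H_kᴴ) over all admissible covariance matrices is attained. -/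
open Matrix
open scoped ComplexOrder

open Classical in
/-- The largest eigenvalue of a (Hermitian) complex matrix. -/
noncomputable def lambdaMax {n : ℕ} (M : Matrix (Fin n) (Fin n) ℂ) : ℝ :=
  if h : M.IsHermitian then ⨆ i, h.eigenvalues i else 0

/-!
Write `w_k = H_kᴴ v`. Then `Q_k = P_k · w_k w_kᴴ / ‖w_k‖²` is `P_k` times the orthogonal projection
onto the line `ℂ w_k`, so `Q_k ≤ P_k · I` and `H_k Q_k H_kᴴ ≤ P_k H_k H_kᴴ` in the Loewner order;
summing, `S := Σ_k H_k Q_k H_kᴴ ≤ R̃`, whence `λ_max(S) ≤ λ_max(R̃)`. Conversely `Q_k w_k = P_k w_k`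
gives `S v = R̃ v = λ_max(R̃) v`, so `λ_max(R̃)` is an eigenvalue of `S` and `λ_max(R̃) ≤ λ_max(S)`.
-/

open scoped MatrixOrder

section LambdaMax

theorem Matrix.IsHermitian.of_le {m : Type*} [Fintype m] {A B : Matrix m m ℂ}
    (hB : B.IsHermitian) (hAB : A ≤ B) : A.IsHermitian := by
  simpa using hB.sub hAB.isHermitian

variable {n : ℕ} {A B : Matrix (Fin n) (Fin n) ℂ}

theorem lambdaMax_le_iff [Nonempty (Fin n)] (hA : A.IsHermitian) {r : ℝ} :
    lambdaMax A ≤ r ↔ A ≤ algebraMap ℝ _ r := by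
  rw [lambdaMax, dif_pos hA, ciSup_le_iff (Set.finite_range _).bddAbove,
    le_algebraMap_iff_spectrum_le hA.isSelfAdjoint, hA.spectrum_real_eq_range_eigenvalues,
    Set.forall_mem_range]

theorem le_algebraMap_lambdaMax (hA : A.IsHermitian) : A ≤ algebraMap ℝ _ (lambdaMax A) := by
  cases isEmpty_or_nonempty (Fin n)
  · exact (Subsingleton.elim A _).le
  · exact (lambdaMax_le_iff hA).mp le_rfl

theorem lambdaMax_mono (hB : B.IsHermitian) (hAB : A ≤ B) : lambdaMax A ≤ lambdaMax B := by
  cases isEmpty_or_nonempty (Fin n)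
  · rw [Subsingleton.elim A B]
  · exact (lambdaMax_le_iff (hB.of_le hAB)).mpr (hAB.trans (le_algebraMap_lambdaMax hB))

theorem le_lambdaMax_of_mulVec_eq_smul (hA : A.IsHermitian) {x : Fin n → ℂ} {μ : ℝ}
    (hx : star x ⬝ᵥ x = 1) (hAx : A *ᵥ x = (μ : ℂ) • x) : μ ≤ lambdaMax A := by
  have := (le_algebraMap_lambdaMax hA).dotProduct_mulVec_nonneg x
  rw [Algebra.algebraMap_eq_smul_one, sub_mulVec, hAx, smul_mulVec, one_mulVec, dotProduct_sub,
    dotProduct_smul, dotProduct_smul, hx, Complex.real_smul, smul_eq_mul, mul_one, mul_one,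
    sub_nonneg] at this
  exact_mod_cast this

end LambdaMax

section LineProjection

variable {l m : Type*} [Fintype l] [Fintype m]

theorem star_dotProduct_mul_le (w x : m → ℂ) :
    star (star w ⬝ᵥ x) * (star w ⬝ᵥ x) ≤ (star w ⬝ᵥ w) * (star x ⬝ᵥ x) := by
  have hinner (y z : m → ℂ) : star y ⬝ᵥ z = inner ℂ (WithLp.toLp 2 y) (WithLp.toLp 2 z) := by
    rw [EuclideanSpace.inner_toLp_toLp, dotProduct_comm]
  rw [hinner, hinner, hinner, inner_self_eq_norm_sq_to_K, inner_self_eq_norm_sq_to_K,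
    Complex.star_def, Complex.conj_mul', RCLike.ofReal_eq_complex_ofReal]
  have hcs := pow_le_pow_left₀ (norm_nonneg _)
    (norm_inner_le_norm (𝕜 := ℂ) (WithLp.toLp 2 w) (WithLp.toLp 2 x)) 2
  rw [mul_pow] at hcs
  exact_mod_cast hcs

theorem vecMulVec_self_star_le [DecidableEq m] (w : m → ℂ) :
    vecMulVec w (star w) ≤ (star w ⬝ᵥ w) • 1 := by
  have hc := dotProduct_star_self_nonneg w
  refine PosSemidef.of_dotProduct_mulVec_nonneg
    ((PosSemidef.one.smul hc).isHermitian.sub (posSemidef_vecMulVec_self_star w).isHermitian)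
    fun x => ?_
  rw [sub_mulVec, smul_mulVec, one_mulVec, vecMulVec_mulVec, op_smul_eq_smul, dotProduct_sub,
    dotProduct_smul, dotProduct_smul, smul_eq_mul, smul_eq_mul, star_dotProduct x w, sub_nonneg,
    mul_comm]
  exact star_dotProduct_mul_le w x

/-- Orthogonal projection onto the line spanned by `w`; it is `0` when `w = 0`, as `0⁻¹ = 0`. -/
noncomputable def lineProj (w : m → ℂ) : Matrix m m ℂ :=
  (star w ⬝ᵥ w)⁻¹ • vecMulVec w (star w)

theorem lineProj_posSemidef (w : m → ℂ) : (lineProj w).PosSemidef :=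
  (posSemidef_vecMulVec_self_star w).smul (inv_nonneg.mpr (dotProduct_star_self_nonneg w))

theorem lineProj_mulVec_self (w : m → ℂ) : lineProj w *ᵥ w = w := by
  by_cases hw : w = 0
  · simp [hw]
  · rw [lineProj, smul_mulVec, vecMulVec_mulVec, op_smul_eq_smul, smul_smul,
      inv_mul_cancel₀ (dotProduct_star_self_eq_zero.not.mpr hw), one_smul]

theorem trace_lineProj_le_one (w : m → ℂ) : (lineProj w).trace ≤ 1 := by
  by_cases hw : w = 0
  · simp [hw, lineProj]
  · rw [lineProj, trace_smul, trace_vecMulVec, dotProduct_comm w, smul_eq_mul,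
      inv_mul_cancel₀ (dotProduct_star_self_eq_zero.not.mpr hw)]

theorem lineProj_le_one [DecidableEq m] (w : m → ℂ) : lineProj w ≤ 1 := by
  by_cases hw : w = 0
  · simp [hw, lineProj]
  · have hc : star w ⬝ᵥ w ≠ 0 := dotProduct_star_self_eq_zero.not.mpr hw
    rw [le_iff, show (1 : Matrix m m ℂ) = (star w ⬝ᵥ w)⁻¹ • ((star w ⬝ᵥ w) • 1) by
      rw [smul_smul, inv_mul_cancel₀ hc, one_smul], lineProj, ← smul_sub]
    exact (vecMulVec_self_star_le w).smul (inv_nonneg.mpr (dotProduct_star_self_nonneg w))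

theorem mul_mul_conjTranspose_le_of_le {A B : Matrix m m ℂ} (h : A ≤ B) (H : Matrix l m ℂ) :
    H * A * Hᴴ ≤ H * B * Hᴴ := by
  rw [le_iff, ← Matrix.sub_mul, ← Matrix.mul_sub]
  exact h.mul_mul_conjTranspose_same H

end LineProjection

section Covariance

variable {l m : Type*} [Fintype l] [Fintype m]

theorem div_smul_vecMulVec_eq_smul_lineProj (P : ℝ) (H : Matrix l m ℂ) (v : l → ℂ) :
    ((P : ℂ) / (star v ⬝ᵥ ((H * Hᴴ) *ᵥ v))) • vecMulVec (Hᴴ *ᵥ v) (star v ᵥ* H) =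
      P • lineProj (Hᴴ *ᵥ v) := by
  have hrow : star v ᵥ* H = star (Hᴴ *ᵥ v) := by
    rw [star_mulVec, conjTranspose_conjTranspose]
  rw [← mulVec_mulVec, dotProduct_mulVec, hrow, lineProj, div_eq_mul_inv, mul_smul,
    Complex.coe_smul]

theorem mul_smul_lineProj_mul_conjTranspose_le [DecidableEq m] {P : ℝ} (hP : 0 ≤ P) (H : Matrix l m ℂ)
    (w : m → ℂ) : H * (P • lineProj w) * Hᴴ ≤ P • (H * Hᴴ) := by
  rw [Matrix.mul_smul, Matrix.smul_mul]
  refine smul_le_smul_of_nonneg_left ?_ hP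
  simpa using mul_mul_conjTranspose_le_of_le (lineProj_le_one w) H

theorem mul_smul_lineProj_mul_conjTranspose_mulVec (P : ℝ) (H : Matrix l m ℂ) (v : l → ℂ) :
    (H * (P • lineProj (Hᴴ *ᵥ v)) * Hᴴ) *ᵥ v = P • ((H * Hᴴ) *ᵥ v) := by
  rw [← mulVec_mulVec, ← mulVec_mulVec, smul_mulVec, lineProj_mulVec_self, mulVec_smul,
    mulVec_mulVec]

end Covariance

theorem lambdaMax_attained_general {K Mr : ℕ} (M : Fin K → ℕ)
    (H : ∀ k, Matrix (Fin Mr) (Fin (M k)) ℂ)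
    (P : Fin K → ℝ) (hP : ∀ k, 0 ≤ P k)
    (v : Fin Mr → ℂ) (hv : star v ⬝ᵥ v = 1)
    (hev : (∑ k, P k • (H k * (H k)ᴴ)) *ᵥ v =
      (lambdaMax (∑ k, P k • (H k * (H k)ᴴ)) : ℂ) • v)
    (Q : ∀ k, Matrix (Fin (M k)) (Fin (M k)) ℂ)
    (hQdef : ∀ k, Q k = ((P k : ℂ) / (star v ⬝ᵥ ((H k * (H k)ᴴ) *ᵥ v))) •
      Matrix.vecMulVec ((H k)ᴴ *ᵥ v) (Matrix.vecMul (star v) (H k))) :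
    (∀ k, (Q k).PosSemidef) ∧ (∀ k, (Q k).trace ≤ (P k : ℂ)) ∧
      lambdaMax (∑ k, H k * Q k * (H k)ᴴ) = lambdaMax (∑ k, P k • (H k * (H k)ᴴ)) := by
  have hQ (k : Fin K) : Q k = P k • lineProj ((H k)ᴴ *ᵥ v) :=
    (hQdef k).trans (div_smul_vecMulVec_eq_smul_lineProj _ _ _)
  have hR : (∑ k, P k • (H k * (H k)ᴴ)).IsHermitian :=
    (posSemidef_sum _ fun k _ => (posSemidef_self_mul_conjTranspose (H k)).smul (hP k)).isHermitian
  have hSR : ∑ k, H k * Q k * (H k)ᴴ ≤ ∑ k, P k • (H k * (H k)ᴴ) :=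
    Finset.sum_le_sum fun k _ => hQ k ▸ mul_smul_lineProj_mul_conjTranspose_le (hP k) _ _
  have hSv : (∑ k, H k * Q k * (H k)ᴴ) *ᵥ v = (∑ k, P k • (H k * (H k)ᴴ)) *ᵥ v := by
    simp only [sum_mulVec, hQ, mul_smul_lineProj_mul_conjTranspose_mulVec, smul_mulVec]
  refine ⟨fun k => hQ k ▸ (lineProj_posSemidef _).smul (hP k), fun k => ?_,
    le_antisymm (lambdaMax_mono hR hSR)
      (le_lambdaMax_of_mulVec_eq_smul (hR.of_le hSR) hv (hSv.trans hev))⟩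
  rw [hQ k, trace_smul, ← mul_one (P k : ℂ), ← Complex.real_smul]
  exact smul_le_smul_of_nonneg_left (trace_lineProj_le_one _) (hP k)

/-- Let `R̃ = Σ_k P_k · H_k H_kᴴ` and let `v` be a unit-norm eigenvector of `R̃`
for the eigenvalue `λ_max(R̃)`, with `vᴴ H_k H_kᴴ v ≠ 0` for all `k`.  Then the
covariance matrices `Q_k = (P_k / (vᴴ H_k H_kᴴ v)) · H_kᴴ v vᴴ H_k` are positive
semidefinite, satisfy the power constraints `tr(Q_k) ≤ P_k`, and attain the
upper bound: `λ_max(Σ_k H_k Q_k H_kᴴ) = λ_max(R̃)`. -/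
theorem lambdaMax_attained {K Mr : ℕ} (hK : 0 < K) (M : Fin K → ℕ)
    (H : ∀ k, Matrix (Fin Mr) (Fin (M k)) ℂ)
    (P : Fin K → ℝ) (hP : ∀ k, 0 ≤ P k)
    (v : Fin Mr → ℂ) (hv : star v ⬝ᵥ v = 1)
    (hev : (∑ k, P k • (H k * (H k)ᴴ)) *ᵥ v =
      (lambdaMax (∑ k, P k • (H k * (H k)ᴴ)) : ℂ) • v)
    (hne : ∀ k, star v ⬝ᵥ ((H k * (H k)ᴴ) *ᵥ v) ≠ 0)
    (Q : ∀ k, Matrix (Fin (M k)) (Fin (M k)) ℂ)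
    (hQdef : ∀ k, Q k = ((P k : ℂ) / (star v ⬝ᵥ ((H k * (H k)ᴴ) *ᵥ v))) •
      Matrix.vecMulVec ((H k)ᴴ *ᵥ v) (Matrix.vecMul (star v) (H k))) :
    (∀ k, (Q k).PosSemidef) ∧ (∀ k, (Q k).trace ≤ (P k : ℂ)) ∧
      lambdaMax (∑ k, H k * Q k * (H k)ᴴ) = lambdaMax (∑ k, P k • (H k * (H k)ᴴ)) :=
  lambdaMax_attained_general M H P hP v hv hev Q hQdef
end

section
/- Let σ² ≥ 0, P ≥ 0, P_r ≥ 0 be real numbers, let α₁ ≥ α₂ ≥ … ≥ α_m ≥ 0, and consider nonnegative reals q₁,…,q_m and f₁,…,f_{M_r} satisfying Σᵢ qᵢ ≤ P and Σᵢ (αᵢ qᵢ + 1) fᵢ ≤ P_r. Then log₂(1 + σ²·α₁·q₁·f₁/(σ²·f₁ + 1)) ≤ log₂(1 + σ²·α₁·P·P_r/(σ²·P_r + α₁·P + 1)). Moreover, this upper bound is attained by q₁ = P, q₂ = … = q_m = 0, f₁ = P_r/(1 + α₁P), f₂ = … = f_{M_r} = 0. -/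
/-- Single-user AF relay rate optimization with one receive antenna.
For squared singular values `α 0 ≥ α 1 ≥ … ≥ 0`, source powers `q i` with
`Σ_{i<m} q i ≤ P` and relay coefficients `f i` with
`Σ_{i<Mr} (α i * q i + 1) * f i ≤ P_r`, the achieved rate
`log₂(1 + σ²α₁q₁f₁/(σ²f₁+1))` is at most
`log₂(1 + σ²α₁ P P_r/(σ²P_r + α₁P + 1))`; moreover this bound is attained by
`q₁ = P, q₂ = … = 0` and `f₁ = P_r/(1+α₁P), f₂ = … = 0`. -/
theorem single_user_relay_optimal (σ2 P Pr : ℝ)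
    (hσ : 0 ≤ σ2) (hP : 0 ≤ P) (hPr : 0 ≤ Pr)
    (m mr : ℕ) (hm : 0 < m) (hmr : 0 < mr)
    (α : ℕ → ℝ) (hα : Antitone α) (hα0 : ∀ i, 0 ≤ α i)
    (q f : ℕ → ℝ) (hq : ∀ i, 0 ≤ q i) (hf : ∀ i, 0 ≤ f i)
    (hqP : ∑ i ∈ Finset.range m, q i ≤ P)
    (hfP : ∑ i ∈ Finset.range mr, (α i * q i + 1) * f i ≤ Pr) :
    Real.logb 2 (1 + σ2 * α 0 * q 0 * f 0 / (σ2 * f 0 + 1)) ≤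
      Real.logb 2 (1 + σ2 * α 0 * P * Pr / (σ2 * Pr + α 0 * P + 1)) ∧
    (let q' : ℕ → ℝ := fun i => if i = 0 then P else 0
     let f' : ℕ → ℝ := fun i => if i = 0 then Pr / (1 + α 0 * P) else 0
     (∑ i ∈ Finset.range m, q' i ≤ P) ∧
     (∑ i ∈ Finset.range mr, (α i * q' i + 1) * f' i ≤ Pr) ∧
     Real.logb 2 (1 + σ2 * α 0 * q' 0 * f' 0 / (σ2 * f' 0 + 1)) =
       Real.logb 2 (1 + σ2 * α 0 * P * Pr / (σ2 * Pr + α 0 * P + 1))) := by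
  have ha : 0 ≤ α 0 := hα0 0
  have hx0 : 0 ≤ q 0 := hq 0
  have hy0 : 0 ≤ f 0 := hf 0
  -- q 0 ≤ P
  have hxP : q 0 ≤ P := by
    refine le_trans ?_ hqP
    exact Finset.single_le_sum (fun i _ => hq i) (Finset.mem_range.mpr hm)
  -- (α 0 * q 0 + 1) * f 0 ≤ Pr
  have hyPr : (α 0 * q 0 + 1) * f 0 ≤ Pr := by
    refine le_trans ?_ hfP
    exact Finset.single_le_sum (f := fun i => (α i * q i + 1) * f i)
      (fun i _ => mul_nonneg (add_nonneg (mul_nonneg (hα0 i) (hq i)) zero_le_one) (hf i)) (Finset.mem_range.mpr hmr)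
  have hden1 : (0:ℝ) < σ2 * f 0 + 1 := by positivity
  have hden2 : (0:ℝ) < σ2 * Pr + α 0 * P + 1 := by positivity
  constructor
  · have hpos : (0:ℝ) < 1 + σ2 * α 0 * q 0 * f 0 / (σ2 * f 0 + 1) := by positivity
    apply Real.logb_le_logb_of_le (by norm_num : (1:ℝ) < 2) hpos
    have key : σ2 * α 0 * q 0 * f 0 / (σ2 * f 0 + 1) ≤
        σ2 * α 0 * P * Pr / (σ2 * Pr + α 0 * P + 1) := by
      rw [div_le_div_iff₀ hden1 hden2]
      nlinarith [mul_nonneg (mul_nonneg hσ ha) (mul_nonneg hy0 hPr),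
        mul_le_mul_of_nonneg_left hxP (mul_nonneg (mul_nonneg hσ hσ) (mul_nonneg ha hy0)),
        mul_le_mul_of_nonneg_left hyPr (mul_nonneg hσ (mul_nonneg ha hP)),
        mul_nonneg (mul_nonneg hσ ha) (mul_nonneg hy0 (sub_nonneg.mpr hxP)),
        mul_nonneg hσ (mul_nonneg ha (mul_nonneg hy0 (sub_nonneg.mpr hxP)))]
    linarith
  · intro q' f'
    have hd : (0:ℝ) < 1 + α 0 * P := by positivity
    have hsumq : ∑ i ∈ Finset.range m, q' i = P := by
      rw [Finset.sum_ite_eq' (Finset.range m) 0 (fun _ => P)]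
      simp [Finset.mem_range.mpr hm]
    have hsumf : ∑ i ∈ Finset.range mr, (α i * q' i + 1) * f' i = Pr := by
      have : ∀ i, (α i * q' i + 1) * f' i =
          if i = 0 then (α 0 * P + 1) * (Pr / (1 + α 0 * P)) else 0 := by
        intro i
        by_cases h : i = 0 <;> simp [q', f', h]
      rw [Finset.sum_congr rfl (fun i _ => this i),
        Finset.sum_ite_eq' (Finset.range mr) 0 (fun _ => (α 0 * P + 1) * (Pr / (1 + α 0 * P)))]
      simp only [Finset.mem_range.mpr hmr, if_true]
      field_simp
      ring
    refine ⟨le_of_eq hsumq, le_of_eq hsumf, ?_⟩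
    congr 1
    have hf0 : f' 0 = Pr / (1 + α 0 * P) := by simp [f']
    have hq0 : q' 0 = P := by simp [q']
    rw [hf0, hq0]
    have h2 : (0:ℝ) < σ2 * (Pr / (1 + α 0 * P)) + 1 := by positivity
    field_simp
    ring
end

section
/- Let a > 0, P > 0 and c > 0 be real numbers. The function g(τ) = τ·[log₂(1 + c) − log₂(1 + c/(1 + a·P/τ))] is concave on the interval (0, ∞). -/
/-!
With `b = a * P` and `d = 1 + c` one has `1 + c / (1 + b / τ) = (d * τ + b) / (τ + b)`, so up to
the factor `1 / log 2` the rate is `τ * log (d * (τ + b) / (d * τ + b))`. Its second derivative is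
`b² / τ * ((d * τ + b)⁻² - (τ + b)⁻²)`, which is nonpositive because `d ≥ 1`.
-/

open Real Set

lemma concaveOn_of_hasDerivAt2_nonpos {D : Set ℝ} (hD : Convex ℝ D) (hDo : IsOpen D)
    {f f' f'' : ℝ → ℝ} (hf : ∀ x ∈ D, HasDerivAt f (f' x) x)
    (hf' : ∀ x ∈ D, HasDerivAt f' (f'' x) x) (hf'' : ∀ x ∈ D, f'' x ≤ 0) :
    ConcaveOn ℝ D f := by
  refine concaveOn_of_hasDerivWithinAt2_nonpos (f' := f') (f'' := f'') hD
    (fun x hx => (hf x hx).continuousAt.continuousWithinAt) ?_ ?_ ?_ <;> rw [hDo.interior_eq]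
  exacts [fun x hx => (hf x hx).hasDerivWithinAt, fun x hx => (hf' x hx).hasDerivWithinAt, hf'']

noncomputable def tdmaRateLn (b d τ : ℝ) : ℝ :=
  τ * (log d + log (τ + b) - log (d * τ + b))

noncomputable def tdmaRateLnDeriv (b d τ : ℝ) : ℝ :=
  log d + log (τ + b) - log (d * τ + b) - b / (τ + b) + b / (d * τ + b)

section
variable {b d x : ℝ}

lemma hasDerivAt_tdmaRateLn (h₁ : x + b ≠ 0) (h₂ : d * x + b ≠ 0) :
    HasDerivAt (tdmaRateLn b d) (tdmaRateLnDeriv b d x) x := by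
  have hlin₁ : HasDerivAt (fun τ => τ + b) 1 x := (hasDerivAt_id' x).add_const b
  have hlin₂ : HasDerivAt (fun τ => d * τ + b) d x := by
    simpa using ((hasDerivAt_id' x).const_mul d).add_const b
  refine ((hasDerivAt_id' x).mul
    (((hlin₁.log h₁).const_add (log d)).sub (hlin₂.log h₂))).congr_deriv ?_
  simp only [tdmaRateLnDeriv, Pi.sub_apply]
  -- `field_simp` normalises `d * x` to `x * d` in the goal but not in `h₂`
  rw [mul_comm d x] at h₂ ⊢
  field_simp
  ring

lemma hasDerivAt_tdmaRateLnDeriv (hx : x ≠ 0) (h₁ : x + b ≠ 0) (h₂ : d * x + b ≠ 0) :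
    HasDerivAt (tdmaRateLnDeriv b d)
      (b ^ 2 / x * (((d * x + b) ^ 2)⁻¹ - ((x + b) ^ 2)⁻¹)) x := by
  have hlin₁ : HasDerivAt (fun τ => τ + b) 1 x := (hasDerivAt_id' x).add_const b
  have hlin₂ : HasDerivAt (fun τ => d * τ + b) d x := by
    simpa using ((hasDerivAt_id' x).const_mul d).add_const b
  refine (((((hlin₁.log h₁).const_add (log d)).sub (hlin₂.log h₂)).sub
    ((hasDerivAt_const x b).div hlin₁ h₁)).add
      ((hasDerivAt_const x b).div hlin₂ h₂)).congr_deriv ?_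
  rw [mul_comm d x] at h₂ ⊢
  field_simp
  ring

lemma concaveOn_tdmaRateLn (hb : 0 ≤ b) (hd : 1 ≤ d) :
    ConcaveOn ℝ (Ioi 0) (tdmaRateLn b d) := by
  have hpos {x : ℝ} (hx : x ∈ Ioi (0 : ℝ)) : 0 < x + b ∧ 0 < d * x + b := by
    have : 0 < x := hx
    constructor <;> nlinarith
  refine concaveOn_of_hasDerivAt2_nonpos (convex_Ioi 0) isOpen_Ioi
    (fun x hx => hasDerivAt_tdmaRateLn (hpos hx).1.ne' (hpos hx).2.ne')
    (fun x hx => hasDerivAt_tdmaRateLnDeriv (ne_of_gt hx) (hpos hx).1.ne' (hpos hx).2.ne')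
    fun x hx => ?_
  have hx' : 0 < x := hx
  have h₁ : 0 < x + b := (hpos hx).1
  have h₁₂ : x + b ≤ d * x + b := by nlinarith
  exact mul_nonpos_of_nonneg_of_nonpos (by positivity) (sub_nonpos.2 (by gcongr))

end

lemma tdma_rate_eq_inv_log_two_mul {b c τ : ℝ} (hb : 0 ≤ b) (hc : 0 ≤ c) (hτ : 0 < τ) :
    τ * (logb 2 (1 + c) - logb 2 (1 + c / (1 + b / τ))) =
      (log 2)⁻¹ * tdmaRateLn b (1 + c) τ := by
  have h₁ : 0 < τ + b := by positivity
  have h₂ : 0 < (1 + c) * τ + b := by positivity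
  have harg : 1 + c / (1 + b / τ) = ((1 + c) * τ + b) / (τ + b) := by
    field_simp
    ring
  rw [harg, logb, logb, log_div h₂.ne' h₁.ne', tdmaRateLn]
  ring

/-- The single-user TDMA rate `g(τ) = τ·[log₂(1+c) − log₂(1 + c/(1 + aP/τ))]`
is concave on `(0, ∞)`. -/
theorem tdma_rate_concave (a P c : ℝ) (ha : 0 < a) (hP : 0 < P) (hc : 0 < c) :
    ConcaveOn ℝ (Set.Ioi 0)
      (fun τ : ℝ =>
        τ * (Real.logb 2 (1 + c) - Real.logb 2 (1 + c / (1 + a * P / τ)))) := by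
  have hb : 0 ≤ a * P := by positivity
  have hd : 1 ≤ 1 + c := by linarith
  refine ((concaveOn_tdmaRateLn hb hd).smul (by positivity : 0 ≤ (log 2)⁻¹)).congr ?_
  intro τ hτ
  exact (tdma_rate_eq_inv_log_two_mul hb hc.le hτ).symm
end

section
/- Let K ≥ 1, c > 0, and for each k ∈ {1,…,K} let a_k > 0 and P_k > 0 be real numbers. Define τ*_k = a_k·P_k / Σ_{j=1}^K a_j·P_j. Then Σ_k τ*_k = 1, each τ*_k > 0, and Σ_{k=1}^K τ*_k·[log₂(1 + c) − log₂(1 + c/(1 + a_k·P_k/τ*_k))] = log₂(1 + c) − log₂(1 + c/(1 + Σ_{j=1}^K a_j·P_j)). -/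
/-! At `τ_k = w_k / Σ_j w_j` with `w_k = a_k P_k`, every user sees the same effective power
`w_k / τ_k = Σ_j w_j`, so every summand is `τ_k` times one common rate, and the `τ_k` sum to one. -/

open Finset

section Normalize

variable {ι : Type*} [Fintype ι] (w : ι → ℝ)

theorem sum_div_sum_self (hS : ∑ j, w j ≠ 0) : ∑ i, w i / ∑ j, w j = 1 := by
  rw [← sum_div, div_self hS]

theorem sum_div_sum_mul_apply_div_div_sum (hw : ∀ i, w i ≠ 0) (hS : ∑ j, w j ≠ 0)
    (f : ℝ → ℝ) :
    ∑ i, (w i / ∑ j, w j) * f (w i / (w i / ∑ j, w j)) = f (∑ j, w j) := by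
  simp_rw [div_div_cancel₀ (hw _), ← sum_mul, sum_div_sum_self w hS, one_mul]

end Normalize

theorem tdma_rate_at_optimal_slots_general (K : ℕ) (hK : 0 < K) (c : ℝ)
    (a P : Fin K → ℝ) (ha : ∀ k, 0 < a k) (hP : ∀ k, 0 < P k) :
    (∀ k, 0 < a k * P k / ∑ j, a j * P j) ∧
    (∑ k, a k * P k / ∑ j, a j * P j) = 1 ∧
    ∑ k, (a k * P k / ∑ j, a j * P j) *
        (Real.logb 2 (1 + c) -
          Real.logb 2 (1 + c / (1 + a k * P k / (a k * P k / ∑ j, a j * P j)))) =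
      Real.logb 2 (1 + c) - Real.logb 2 (1 + c / (1 + ∑ j, a j * P j)) := by
  have hw : ∀ k, 0 < a k * P k := fun k => mul_pos (ha k) (hP k)
  have : Nonempty (Fin K) := Fin.pos_iff_nonempty.mp hK
  have hS : 0 < ∑ j, a j * P j := sum_pos (fun j _ => hw j) univ_nonempty
  refine ⟨fun k => div_pos (hw k) hS, sum_div_sum_self _ hS.ne', ?_⟩
  exact sum_div_sum_mul_apply_div_div_sum (fun k => a k * P k) (fun k => (hw k).ne') hS.ne'
    fun x => Real.logb 2 (1 + c) - Real.logb 2 (1 + c / (1 + x))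

/-- Evaluating the TDMA sum rate at the time-slot allocation
`τ*_k = a_k P_k / Σ_j a_j P_j`: the allocation is positive, sums to one, and
yields the sum rate `log₂(1+c) − log₂(1 + c/(1 + Σ_j a_j P_j))`. -/
theorem tdma_rate_at_optimal_slots (K : ℕ) (hK : 0 < K) (c : ℝ) (hc : 0 < c)
    (a P : Fin K → ℝ) (ha : ∀ k, 0 < a k) (hP : ∀ k, 0 < P k) :
    (∀ k, 0 < a k * P k / ∑ j, a j * P j) ∧
    (∑ k, a k * P k / ∑ j, a j * P j) = 1 ∧
    ∑ k, (a k * P k / ∑ j, a j * P j) *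
        (Real.logb 2 (1 + c) -
          Real.logb 2 (1 + c / (1 + a k * P k / (a k * P k / ∑ j, a j * P j)))) =
      Real.logb 2 (1 + c) - Real.logb 2 (1 + c / (1 + ∑ j, a j * P j)) :=
  tdma_rate_at_optimal_slots_general K hK c a P ha hP
end

section
/- Let K ≥ 1, c > 0, and for each k ∈ {1,…,K} let a_k > 0 and P_k > 0. For any τ₁,…,τ_K with τ_k > 0 for all k and Σ_k τ_k = 1, the TDMA sum rate satisfies Σ_{k=1}^K τ_k·[log₂(1 + c) − log₂(1 + c/(1 + a_k·P_k/τ_k))] ≤ log₂(1 + c) − log₂(1 + c/(1 + Σ_{j=1}^K a_j·P_j)), with equality when τ_k = a_k·P_k / Σ_j a_j·P_j for all k. That is, these time-slot durations are optimal. -/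
/-!
Writing `x = a_k P_k / τ_k` for the effective SNR in slot `k`, the TDMA sum rate is
`Σ_k τ_k R(x_k)` with `R(x) = log₂(1 + c) − log₂(1 + c/(1 + x))`, and `Σ_k τ_k x_k = Σ_k a_k P_k`.
Since `R(x) = log₂(1 + c) + log₂(1 − c/(1 + c + x))` is the logarithm of a concave increasing
function, `R` is concave, and Jensen's inequality bounds the sum rate by `R(Σ_k a_k P_k)`.
The allocation `τ_k ∝ a_k P_k` makes every `x_k` equal, so Jensen holds with equality.
-/

open Real Set

theorem ConcaveOn.comp_of_mapsTo {𝕜 E β γ : Type*} [Semiring 𝕜] [PartialOrder 𝕜]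
    [AddCommMonoid E] [AddCommMonoid β] [PartialOrder β] [AddCommMonoid γ] [PartialOrder γ]
    [SMul 𝕜 E] [Module 𝕜 β] [Module 𝕜 γ] {s : Set E} {t : Set β} {f : E → β} {g : β → γ}
    (hg : ConcaveOn 𝕜 t g) (hf : ConcaveOn 𝕜 s f) (hg' : MonotoneOn g t) (hst : MapsTo f s t) :
    ConcaveOn 𝕜 s (g ∘ f) :=
  ⟨hf.1, fun _ hx _ hy _ _ ha hb hab =>
    (hg.2 (hst hx) (hst hy) ha hb hab).trans <|
      hg' (hg.1 (hst hx) (hst hy) ha hb hab) (hst (hf.1 hx hy ha hb hab)) (hf.2 hx hy ha hb hab)⟩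

theorem concaveOn_logb {b : ℝ} (hb : 1 < b) : ConcaveOn ℝ (Ioi 0) (logb b) := by
  have := strictConcaveOn_log_Ioi.concaveOn.smul (inv_nonneg.2 (log_pos hb).le)
  refine this.congr fun x _ => ?_
  simp only [smul_eq_mul, logb, div_eq_inv_mul]

theorem concaveOn_neg_div_add {c : ℝ} (hc : 0 ≤ c) (d : ℝ) :
    ConcaveOn ℝ (Ioi (-d)) fun x => -(c / (d + x)) := by
  have hinv : ConvexOn ℝ (Ioi 0) fun x : ℝ => x⁻¹ := by
    simpa only [zpow_neg_one] using convexOn_zpow (𝕜 := ℝ) (-1)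
  have := ((hinv.translate_right d).smul hc).neg
  refine (this.subset (fun x hx => ?_) (convex_Ioi _)).congr fun x _ => ?_
  · simp only [mem_preimage, mem_Ioi] at hx ⊢
    linarith
  · simp only [Function.comp, smul_eq_mul, div_eq_mul_inv, Pi.neg_apply]

noncomputable def relayRate (c x : ℝ) : ℝ :=
  logb 2 (1 + c) - logb 2 (1 + c / (1 + x))

theorem relayRate_eq_logb_one_sub_div {c x : ℝ} (hc : 0 ≤ c) (hx : -1 < x) :
    relayRate c x = logb 2 (1 - c / (1 + c + x)) + logb 2 (1 + c) := by
  have h : (1 + c / (1 + x))⁻¹ = 1 - c / (1 + c + x) := by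
    rw [one_add_div (by linarith), inv_div, one_sub_div (by linarith)]
    ring
  rw [relayRate, ← h, logb_inv]
  ring

theorem concaveOn_relayRate {c : ℝ} (hc : 0 ≤ c) : ConcaveOn ℝ (Ioi (-1)) (relayRate c) := by
  have hinner : ConcaveOn ℝ (Ioi (-(1 + c))) fun x => 1 - c / (1 + c + x) := by
    refine ((concaveOn_neg_div_add hc (1 + c)).add_const 1).congr fun x _ => ?_
    simp only [Pi.add_apply]
    ring
  have hmono : MonotoneOn (logb 2) (Ioi 0) := (strictMonoOn_logb one_lt_two).monotoneOn
  have hpos : MapsTo (fun x => 1 - c / (1 + c + x)) (Ioi (-1)) (Ioi 0) := fun x (hx : -1 < x) => by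
    show 0 < 1 - c / (1 + c + x)
    rw [sub_pos, div_lt_one (by linarith)]
    linarith
  have := ((concaveOn_logb one_lt_two).comp_of_mapsTo
    (hinner.subset (Ioi_subset_Ioi (by linarith)) (convex_Ioi _)) hmono hpos).add_const
    (logb 2 (1 + c))
  exact this.congr fun x hx => (relayRate_eq_logb_one_sub_div hc hx).symm

section Perspective

variable {ι : Type*} {s : Finset ι} {w y : ι → ℝ}

theorem ConcaveOn.sum_mul_apply_div_le {t : Set ℝ} {f : ℝ → ℝ} (hf : ConcaveOn ℝ t f)
    (hw : ∀ i ∈ s, 0 < w i) (hw₁ : ∑ i ∈ s, w i = 1) (hyt : ∀ i ∈ s, y i / w i ∈ t) :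
    ∑ i ∈ s, w i * f (y i / w i) ≤ f (∑ i ∈ s, y i) := by
  have hjensen := hf.le_map_sum (fun i hi => (hw i hi).le) hw₁ hyt
  simp only [smul_eq_mul] at hjensen
  rwa [Finset.sum_congr rfl fun i hi => mul_div_cancel₀ (y i) (hw i hi).ne'] at hjensen

theorem sum_mul_apply_div_eq_of_eq_div_sum (f : ℝ → ℝ) (hy : ∀ i ∈ s, y i ≠ 0)
    (hw₁ : ∑ i ∈ s, w i = 1) (hw : ∀ i ∈ s, w i = y i / ∑ j ∈ s, y j) :
    ∑ i ∈ s, w i * f (y i / w i) = f (∑ i ∈ s, y i) := by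
  calc ∑ i ∈ s, w i * f (y i / w i) = ∑ i ∈ s, w i * f (∑ j ∈ s, y j) :=
        Finset.sum_congr rfl fun i hi => by rw [hw i hi, div_div_cancel₀ (hy i hi)]
    _ = f (∑ i ∈ s, y i) := by rw [← Finset.sum_mul, hw₁, one_mul]

end Perspective

theorem tdma_slots_optimal_general (K : ℕ) (c : ℝ) (hc : 0 < c)
    (a P : Fin K → ℝ) (ha : ∀ k, 0 < a k) (hP : ∀ k, 0 < P k)
    (τ : Fin K → ℝ) (hτ : ∀ k, 0 < τ k) (hsum : ∑ k, τ k = 1) :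
    (∑ k, τ k * (Real.logb 2 (1 + c) -
        Real.logb 2 (1 + c / (1 + a k * P k / τ k))) ≤
      Real.logb 2 (1 + c) - Real.logb 2 (1 + c / (1 + ∑ j, a j * P j))) ∧
    ((∀ k, τ k = a k * P k / ∑ j, a j * P j) →
      ∑ k, τ k * (Real.logb 2 (1 + c) -
          Real.logb 2 (1 + c / (1 + a k * P k / τ k))) =
        Real.logb 2 (1 + c) - Real.logb 2 (1 + c / (1 + ∑ j, a j * P j))) := by
  have hgain : ∀ k, 0 < a k * P k := fun k => mul_pos (ha k) (hP k)
  refine ⟨(concaveOn_relayRate hc.le).sum_mul_apply_div_le (fun k _ => hτ k) hsum fun k _ => ?_,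
    fun hopt => sum_mul_apply_div_eq_of_eq_div_sum (relayRate c) (fun k _ => (hgain k).ne') hsum
      fun k _ => hopt k⟩
  exact (neg_one_lt_zero.trans (div_pos (hgain k) (hτ k)) :)

/-- Optimality of the time-slot durations `τ_k = a_k P_k / Σ_j a_j P_j`:
for any positive `τ` summing to one, the TDMA sum rate is at most
`log₂(1+c) − log₂(1 + c/(1 + Σ_j a_j P_j))`, with equality at the above
allocation. -/
theorem tdma_slots_optimal (K : ℕ) (hK : 0 < K) (c : ℝ) (hc : 0 < c)
    (a P : Fin K → ℝ) (ha : ∀ k, 0 < a k) (hP : ∀ k, 0 < P k)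
    (τ : Fin K → ℝ) (hτ : ∀ k, 0 < τ k) (hsum : ∑ k, τ k = 1) :
    (∑ k, τ k * (Real.logb 2 (1 + c) -
        Real.logb 2 (1 + c / (1 + a k * P k / τ k))) ≤
      Real.logb 2 (1 + c) - Real.logb 2 (1 + c / (1 + ∑ j, a j * P j))) ∧
    ((∀ k, τ k = a k * P k / ∑ j, a j * P j) →
      ∑ k, τ k * (Real.logb 2 (1 + c) -
          Real.logb 2 (1 + c / (1 + a k * P k / τ k))) =
        Real.logb 2 (1 + c) - Real.logb 2 (1 + c / (1 + ∑ j, a j * P j))) :=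
  tdma_slots_optimal_general K c hc a P ha hP τ hτ hsum
end

section
/- Let K ≥ 1, let h ∈ ℂ^{M_r}, P_r ≥ 0, and for each k ∈ {1,…,K} let H_k ∈ ℂ^{M_r × M_k} and P_k ≥ 0. Set α_k = λ_max(H_k H_kᴴ) and R̃ = Σ_{k=1}^K P_k · H_k H_kᴴ. Then the TDMA sum rate is at least the joint relaying sum rate: log₂(1 + ‖h‖²P_r) − log₂(1 + ‖h‖²P_r/(1 + Σ_{k=1}^K α_k P_k)) ≥ log₂(1 + ‖h‖²P_r) − log₂(1 + ‖h‖²P_r/(1 + λ_max(R̃))). -/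
open Matrix
open scoped ComplexOrder

/-!
In the Loewner order a Hermitian `A` satisfies `A ≤ λ_max(A) • 1`, and `A ≤ c • 1` with `c ≥ 0`
forces `λ_max(A) ≤ c`. Since `P_k • H_k H_kᴴ ≤ α_k P_k • 1`, summing gives
`R̃ ≤ (∑ α_k P_k) • 1`, i.e. `λ_max(R̃) ≤ ∑ α_k P_k`, and the sum rate
`log(1 + a) - log(1 + a / (1 + x))` is nondecreasing in `x`.
-/

open scoped MatrixOrder

namespace Matrix

variable {n : ℕ} {A : Matrix (Fin n) (Fin n) ℂ}

lemma IsHermitian.lambdaMax_eq_iSup (hA : A.IsHermitian) : lambdaMax A = ⨆ i, hA.eigenvalues i :=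
  dif_pos hA

lemma PosSemidef.lambdaMax_nonneg (hA : A.PosSemidef) : 0 ≤ lambdaMax A := by
  rw [hA.isHermitian.lambdaMax_eq_iSup]
  exact Real.iSup_nonneg hA.eigenvalues_nonneg

lemma IsHermitian.le_lambdaMax_smul_one (hA : A.IsHermitian) : A ≤ lambdaMax A • 1 := by
  rw [← Algebra.algebraMap_eq_smul_one, le_algebraMap_iff_spectrum_le hA.isSelfAdjoint,
    hA.spectrum_real_eq_range_eigenvalues, Set.forall_mem_range, hA.lambdaMax_eq_iSup]
  exact le_ciSup (Set.finite_range _).bddAbove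

lemma IsHermitian.lambdaMax_le_of_le_smul_one (hA : A.IsHermitian) {c : ℝ} (hc : 0 ≤ c)
    (hAc : A ≤ c • 1) : lambdaMax A ≤ c := by
  rw [← Algebra.algebraMap_eq_smul_one, le_algebraMap_iff_spectrum_le hA.isSelfAdjoint,
    hA.spectrum_real_eq_range_eigenvalues, Set.forall_mem_range] at hAc
  rw [hA.lambdaMax_eq_iSup]
  exact Real.iSup_le hAc hc

lemma lambdaMax_sum_smul_le {ι : Type*} (s : Finset ι) {B : ι → Matrix (Fin n) (Fin n) ℂ}
    (hB : ∀ i ∈ s, (B i).PosSemidef) {c : ι → ℝ} (hc : ∀ i ∈ s, 0 ≤ c i) :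
    lambdaMax (∑ i ∈ s, c i • B i) ≤ ∑ i ∈ s, lambdaMax (B i) * c i := by
  have hsum : (∑ i ∈ s, c i • B i).IsHermitian :=
    (posSemidef_sum s fun i hi => (hB i hi).smul (hc i hi)).isHermitian
  refine hsum.lambdaMax_le_of_le_smul_one
    (Finset.sum_nonneg fun i hi => mul_nonneg (hB i hi).lambdaMax_nonneg (hc i hi)) ?_
  rw [Finset.sum_smul]
  refine Finset.sum_le_sum fun i hi => ?_
  rw [mul_comm, mul_smul]
  exact smul_le_smul_of_nonneg_left (hB i hi).isHermitian.le_lambdaMax_smul_one (hc i hi)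

end Matrix

lemma Real.logb_one_add_div_one_add_le {b a x y : ℝ} (hb : 1 < b) (ha : 0 ≤ a) (hx : 0 ≤ x)
    (hxy : x ≤ y) : Real.logb b (1 + a / (1 + y)) ≤ Real.logb b (1 + a / (1 + x)) := by
  have hy : 0 ≤ y := hx.trans hxy
  gcongr

theorem tdma_ge_joint_relaying_general (K Mr : ℕ) (M : Fin K → ℕ)
    (h : EuclideanSpace ℂ (Fin Mr)) (Pr : ℝ) (hPr : 0 ≤ Pr)
    (H : ∀ k, Matrix (Fin Mr) (Fin (M k)) ℂ)
    (P : Fin K → ℝ) (hP : ∀ k, 0 ≤ P k) :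
    Real.logb 2 (1 + ‖h‖ ^ 2 * Pr) -
        Real.logb 2 (1 + ‖h‖ ^ 2 * Pr / (1 + ∑ k, lambdaMax (H k * (H k)ᴴ) * P k)) ≥
      Real.logb 2 (1 + ‖h‖ ^ 2 * Pr) -
        Real.logb 2 (1 + ‖h‖ ^ 2 * Pr / (1 + lambdaMax (∑ k, P k • (H k * (H k)ᴴ)))) := by
  have hGram : ∀ k ∈ Finset.univ, (H k * (H k)ᴴ).PosSemidef := fun k _ =>
    posSemidef_self_mul_conjTranspose (H k)
  have hR : (∑ k, P k • (H k * (H k)ᴴ)).PosSemidef :=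
    posSemidef_sum _ fun k hk => (hGram k hk).smul (hP k)
  refine sub_le_sub_left (Real.logb_one_add_div_one_add_le one_lt_two (by positivity)
    hR.lambdaMax_nonneg ?_) _
  exact lambdaMax_sum_smul_le _ hGram fun k _ => hP k

/-- Superiority of TDMA: with `α_k = λ_max(H_k H_kᴴ)` and
`R̃ = Σ_k P_k · H_k H_kᴴ`, the optimized TDMA sum rate
`log₂(1+‖h‖²P_r) − log₂(1 + ‖h‖²P_r/(1 + Σ_k α_k P_k))` is at least the
optimized joint relaying sum rate
`log₂(1+‖h‖²P_r) − log₂(1 + ‖h‖²P_r/(1 + λ_max(R̃)))`. -/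
theorem tdma_ge_joint_relaying (K Mr : ℕ) (hK : 0 < K) (M : Fin K → ℕ)
    (h : EuclideanSpace ℂ (Fin Mr)) (Pr : ℝ) (hPr : 0 ≤ Pr)
    (H : ∀ k, Matrix (Fin Mr) (Fin (M k)) ℂ)
    (P : Fin K → ℝ) (hP : ∀ k, 0 ≤ P k) :
    Real.logb 2 (1 + ‖h‖ ^ 2 * Pr) -
        Real.logb 2 (1 + ‖h‖ ^ 2 * Pr / (1 + ∑ k, lambdaMax (H k * (H k)ᴴ) * P k)) ≥
      Real.logb 2 (1 + ‖h‖ ^ 2 * Pr) -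
        Real.logb 2 (1 + ‖h‖ ^ 2 * Pr / (1 + lambdaMax (∑ k, P k • (H k * (H k)ᴴ)))) :=
  tdma_ge_joint_relaying_general K Mr M h Pr hPr H P hP
end
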